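/- If Δ ≥ 1 and q ≥ 2Δ + 1, then for every coloring σ ∈ [q]^V (proper or not) and every proper coloring τ ∈ [q]^V of G, there exists an integer t ≥ 1 such that P^t(σ, τ) > 0; that is, any proper coloring can be reached by the Local Glauber dynamics from any coloring. -/

import Mathlib

open Finset

attribute [local instance] Classical.propDecidable

namespace LocalGlauber

variable {V : Type*} [Fintype V] [DecidableEq V]

/-- A coloring is proper if adjacent vertices get different colors. -/
def IsProper (G : SimpleGraph V) {q : ℕ} (σ : V → Fin q) : Prop :=
  ∀ ⦃x y : V⦄, G.Adj x y → σ x ≠ σ y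

/-- The acceptance condition of the Local Glauber dynamics at node `v`, given the
current coloring `σ` and the proposals `c` (with `c u = σ u` for unmarked nodes):
`c v ∉ ⋃_{u ∈ N(v)} {σ u, c u}` and `c u ∉ {σ v, c v}` for every neighbor `u`. -/
def Accept (G : SimpleGraph V) {q : ℕ} (σ c : V → Fin q) (v : V) : Prop :=
  ∀ u : V, G.Adj v u → c v ≠ σ u ∧ c v ≠ c u ∧ c u ≠ σ v ∧ c u ≠ c v

/-- One step of the Local Glauber dynamics, given proposals `c`
(nodes with `c v = σ v`, in particular unmarked nodes, never change state). -/
noncomputable def glauberStep (G : SimpleGraph V) {q : ℕ} (σ c : V → Fin q) : V → Fin q :=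
  fun v => if Accept G σ c v then c v else σ v

/-- Probability weight of the random choice `(m, c)`: each node is marked (`m v = true`)
independently with probability `γ`; a marked node proposes a uniform color in `[q]`;
an unmarked node proposes its current color. -/
noncomputable def glauberWeight {q : ℕ} (γ : ℝ) (σ : V → Fin q) (m : V → Bool)
    (c : V → Fin q) : ℝ :=
  ∏ v : V, (if m v then γ / q else if c v = σ v then 1 - γ else 0)

/-- Transition matrix of the Local Glauber dynamics. -/
noncomputable def P (G : SimpleGraph V) (q : ℕ) (γ : ℝ) (σ τ : V → Fin q) : ℝ :=
  ∑ m : V → Bool, ∑ c : V → Fin q,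
    if glauberStep G σ c = τ then glauberWeight γ σ m c else 0

/-- `t`-step iterate of the transition matrix. -/
noncomputable def Pt (G : SimpleGraph V) (q : ℕ) (γ : ℝ) : ℕ → (V → Fin q) → (V → Fin q) → ℝ
  | 0 => fun σ τ => if σ = τ then 1 else 0
  | t + 1 => fun σ τ => ∑ ρ : V → Fin q, Pt G q γ t σ ρ * P G q γ ρ τ

/-- Uniform distribution over the proper `q`-colorings of `G`. -/
noncomputable def uniformProper (G : SimpleGraph V) (q : ℕ) (σ : V → Fin q) : ℝ :=
  if IsProper G σ then
    1 / ((univ.filter (fun τ : V → Fin q => IsProper G τ)).card : ℝ)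
  else 0

/-- Total variation distance between two distributions on a finite set. -/
noncomputable def dTV {Ω : Type*} [Fintype Ω] (μ ν : Ω → ℝ) : ℝ :=
  (1 / 2) * ∑ x : Ω, |μ x - ν x|

end LocalGlauber

/-!
One step in which every node proposes moves `σ` to any proper coloring `μ` that differs from `σ`
across every edge. Ordering the nodes, `μ` can be chosen greedily so that moreover `μ u ≠ τ v`
whenever `u` precedes `v`: at each node at most `2Δ < q` colors are excluded, namely one `σ`-color
per neighbor plus the `μ`-color of an earlier or the `τ`-color of a later neighbor. From `μ`,
recoloring to `τ` the last node where the current coloring disagrees with `τ` is then a valid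
single-node move that keeps the coloring proper, so `τ` is reached.
-/

namespace LocalGlauber

variable {V : Type*} {G : SimpleGraph V} {q : ℕ} {γ : ℝ}

theorem glauberStep_eq_of_isProper {σ c : V → Fin q} (hc : IsProper G c)
    (hσc : ∀ ⦃u v⦄, G.Adj u v → σ u ≠ c v) : glauberStep G σ c = c :=
  funext fun _ => if_pos fun _ hvu =>
    ⟨(hσc hvu.symm).symm, hc hvu, (hσc hvu).symm, hc hvu.symm⟩

theorem glauberWeight_nonneg [Fintype V] (hγ0 : 0 ≤ γ) (hγ1 : γ ≤ 1) (σ : V → Fin q)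
    (m : V → Bool) (c : V → Fin q) : 0 ≤ glauberWeight γ σ m c :=
  prod_nonneg fun _ _ => by
    split_ifs
    exacts [by positivity, by linarith, le_rfl]

theorem exists_forall_adj_ne [Fintype V] [DecidableRel G.Adj] (hq : 2 * G.maxDegree < q) (a : V)
    (f g : V → Fin q) : ∃ c : Fin q, ∀ u, G.Adj u a → f u ≠ c ∧ g u ≠ c := by
  set F := (G.neighborFinset a).image f ∪ (G.neighborFinset a).image g
  have hF : #F < #(univ : Finset (Fin q)) :=
    calc #F ≤ G.degree a + G.degree a := by
          grw [card_union_le, card_image_le, card_image_le, G.card_neighborFinset_eq_degree]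
      _ ≤ 2 * G.maxDegree := by have := G.degree_le_maxDegree a; omega
      _ < #(univ : Finset (Fin q)) := by simpa using hq
  obtain ⟨c, -, hc⟩ := exists_mem_notMem_of_card_lt_card hF
  refine ⟨c, fun u hua => ⟨fun h => hc ?_, fun h => hc ?_⟩⟩ <;>
    have hu : u ∈ G.neighborFinset a := (G.mem_neighborFinset a u).mpr hua.symm
  · exact mem_union_left _ (h ▸ mem_image_of_mem f hu)
  · exact mem_union_right _ (h ▸ mem_image_of_mem g hu)

variable [DecidableEq V]

theorem glauberStep_update {x : V → Fin q} {v : V} {b : Fin q}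
    (h : ∀ u, G.Adj v u → x u ≠ b ∧ x u ≠ x v) :
    glauberStep G x (Function.update x v b) = Function.update x v b := by
  funext w
  by_cases hw : w = v
  · subst hw
    refine if_pos fun u hwu => ?_
    rw [Function.update_self, Function.update_of_ne (G.ne_of_adj hwu).symm]
    exact ⟨(h u hwu).1.symm, (h u hwu).1.symm, (h u hwu).2, (h u hwu).1⟩
  · simp only [glauberStep, Function.update_of_ne hw, ite_self]

theorem IsProper.update {x : V → Fin q} (hx : IsProper G x) {a : V} {b : Fin q}
    (hb : ∀ u, G.Adj a u → x u ≠ b) : IsProper G (Function.update x a b) := by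
  intro u v huv
  rcases eq_or_ne u a with rfl | hu
  · rw [Function.update_self, Function.update_of_ne (G.ne_of_adj huv).symm]
    exact (hb v huv).symm
  rcases eq_or_ne v a with rfl | hv
  · rw [Function.update_self, Function.update_of_ne hu]
    exact hb u huv.symm
  · rw [Function.update_of_ne hu, Function.update_of_ne hv]
    exact hx huv

variable [Fintype V]

theorem P_nonneg (hγ0 : 0 ≤ γ) (hγ1 : γ ≤ 1) (σ τ : V → Fin q) : 0 ≤ P G q γ σ τ :=
  sum_nonneg fun m _ => sum_nonneg fun c _ =>
    ite_nonneg (glauberWeight_nonneg hγ0 hγ1 σ m c) le_rfl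

theorem Pt_nonneg (hγ0 : 0 ≤ γ) (hγ1 : γ ≤ 1) (t : ℕ) (σ τ : V → Fin q) :
    0 ≤ Pt G q γ t σ τ := by
  induction t generalizing τ with
  | zero => exact ite_nonneg zero_le_one le_rfl
  | succ t ih => exact sum_nonneg fun ρ _ => mul_nonneg (ih ρ) (P_nonneg hγ0 hγ1 ρ τ)

theorem Pt_succ_pos (hγ0 : 0 ≤ γ) (hγ1 : γ ≤ 1) {t : ℕ} {σ ρ τ : V → Fin q}
    (hσρ : 0 < Pt G q γ t σ ρ) (hρτ : 0 < P G q γ ρ τ) : 0 < Pt G q γ (t + 1) σ τ :=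
  sum_pos' (fun _ _ => mul_nonneg (Pt_nonneg hγ0 hγ1 t σ _) (P_nonneg hγ0 hγ1 _ τ))
    ⟨ρ, mem_univ ρ, mul_pos hσρ hρτ⟩

theorem exists_Pt_pos_of_reflTransGen (hγ0 : 0 ≤ γ) (hγ1 : γ ≤ 1) {σ τ : V → Fin q}
    (h : Relation.ReflTransGen (fun x y => 0 < P G q γ x y) σ τ) :
    ∃ t, 0 < Pt G q γ t σ τ := by
  induction h with
  | refl => exact ⟨0, by simp [Pt]⟩
  | tail _ hρτ ih =>
    obtain ⟨t, ht⟩ := ih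
    exact ⟨t + 1, Pt_succ_pos hγ0 hγ1 ht hρτ⟩

theorem exists_Pt_pos_of_transGen (hγ0 : 0 ≤ γ) (hγ1 : γ ≤ 1) {σ τ : V → Fin q}
    (h : Relation.TransGen (fun x y => 0 < P G q γ x y) σ τ) :
    ∃ t, 1 ≤ t ∧ 0 < Pt G q γ t σ τ := by
  obtain ⟨ρ, hσρ, hρτ⟩ := Relation.TransGen.tail'_iff.mp h
  obtain ⟨t, ht⟩ := exists_Pt_pos_of_reflTransGen hγ0 hγ1 hσρ
  exact ⟨t + 1, by omega, Pt_succ_pos hγ0 hγ1 ht hρτ⟩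

theorem P_glauberStep_pos (hγ0 : 0 < γ) (hγ1 : γ ≤ 1) (hq : 0 < q) (σ c : V → Fin q) :
    0 < P G q γ σ (glauberStep G σ c) := by
  have hweight : 0 < glauberWeight γ σ (fun _ => true) c :=
    prod_pos fun _ _ => by simp only [if_true]; positivity
  refine sum_pos' (fun m _ => sum_nonneg fun c' _ => ?_) ⟨fun _ => true, mem_univ _, ?_⟩
  · exact ite_nonneg (glauberWeight_nonneg hγ0.le hγ1 σ m c') le_rfl
  refine sum_pos' (fun c' _ => ?_) ⟨c, mem_univ c, by rwa [if_pos rfl]⟩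
  exact ite_nonneg (glauberWeight_nonneg hγ0.le hγ1 σ _ c') le_rfl

theorem reflTransGen_of_isProper (hγ0 : 0 < γ) (hγ1 : γ ≤ 1) (hq : 0 < q) {α : Type*}
    [LinearOrder α] {r : V → α} (hr : Function.Injective r) {X Y : V → Fin q}
    (hX : IsProper G X) (hY : IsProper G Y)
    (hXY : ∀ ⦃u v⦄, G.Adj u v → r u < r v → X u ≠ Y v) :
    Relation.ReflTransGen (fun x y => 0 < P G q γ x y) X Y := by
  induction hn : #(univ.filter fun v => X v ≠ Y v) generalizing X with
  | zero =>
    obtain rfl : X = Y := funext fun v => by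
      by_contra hv
      exact (filter_eq_empty_iff.mp (card_eq_zero.mp hn)) (mem_univ v) hv
    exact Relation.ReflTransGen.refl
  | succ n ih =>
    obtain ⟨a, ha, hmax⟩ := exists_max_image (univ.filter fun v => X v ≠ Y v) r
      (card_pos.mp (by omega))
    have hfree : ∀ u, G.Adj a u → X u ≠ Y a := by
      intro u hau
      rcases (hr.ne (G.ne_of_adj hau).symm).lt_or_gt with hlt | hgt
      · exact hXY hau.symm hlt
      · have hXu : X u = Y u := by
          by_contra hu
          exact (hmax u (by simpa using hu)).not_gt hgt
        exact hXu ▸ hY hau.symm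
    have hstep : 0 < P G q γ X (Function.update X a (Y a)) := by
      rw [← glauberStep_update fun u hau => ⟨hfree u hau, hX hau.symm⟩]
      exact P_glauberStep_pos hγ0 hγ1 hq _ _
    refine Relation.ReflTransGen.head hstep (ih (hX.update hfree) (fun u v huv huv' => ?_) ?_)
    · rcases eq_or_ne u a with rfl | hu
      · rw [Function.update_self]
        exact hY huv
      · rw [Function.update_of_ne hu]
        exact hXY huv huv'
    · have herase : (univ.filter fun v => Function.update X a (Y a) v ≠ Y v) =
          (univ.filter fun v => X v ≠ Y v).erase a := by
        ext v
        rcases eq_or_ne v a with rfl | hv <;> simp [Function.update_apply, *]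
      rw [herase, card_erase_of_mem ha, hn, Nat.add_sub_cancel]

theorem exists_isProper_adj_ne [DecidableRel G.Adj] {α : Type*} [LinearOrder α]
    (hq : 2 * G.maxDegree < q) (r : V → α) (σ τ : V → Fin q) :
    ∃ μ : V → Fin q, IsProper G μ ∧ (∀ ⦃u v⦄, G.Adj u v → σ u ≠ μ v) ∧
      ∀ ⦃u v⦄, G.Adj u v → r u < r v → μ u ≠ τ v := by
  suffices ∀ s : Finset V, ∃ μ : V → Fin q, ∀ v ∈ s, ∀ u, G.Adj u v →
      σ u ≠ μ v ∧ (u ∈ s → μ u ≠ μ v) ∧ (r v < r u → μ v ≠ τ u) by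
    obtain ⟨μ, hμ⟩ := this univ
    exact ⟨μ, fun u v huv => (hμ v (mem_univ v) u huv).2.1 (mem_univ u),
      fun u v huv => (hμ v (mem_univ v) u huv).1,
      fun u v huv hr => (hμ u (mem_univ u) v huv.symm).2.2 hr⟩
  intro s
  induction s using induction_on_max_value r with
  | empty => exact ⟨σ, by simp⟩
  | insert a s ha hmax ih =>
    obtain ⟨μ, hμ⟩ := ih
    obtain ⟨c, hcF⟩ :=
      exists_forall_adj_ne hq a σ fun u => if r a < r u then τ u else μ u
    refine ⟨Function.update μ a c, fun v hv u huv => ?_⟩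
    rcases eq_or_ne v a with rfl | hva
    · have hua := (G.ne_of_adj huv)
      obtain ⟨hσu, hFu⟩ := hcF u huv
      refine ⟨by rwa [Function.update_self], fun hu => ?_, fun hr => ?_⟩
      · have hu' := (mem_insert.mp hu).resolve_left hua
        rw [if_neg (hmax u hu').not_gt] at hFu
        rwa [Function.update_self, Function.update_of_ne hua]
      · rw [if_pos hr] at hFu
        rw [Function.update_self]
        exact hFu.symm
    · have hv' := (mem_insert.mp hv).resolve_left hva
      obtain ⟨hσ, hμμ, hμτ⟩ := hμ v hv' u huv
      rw [Function.update_of_ne hva]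
      refine ⟨hσ, fun hu => ?_, hμτ⟩
      rcases eq_or_ne u a with rfl | hua
      · have hFv := (hcF v huv.symm).2
        rw [if_neg (hmax v hv').not_gt] at hFv
        rw [Function.update_self]
        exact hFv.symm
      · rw [Function.update_of_ne hua]
        exact hμμ ((mem_insert.mp hu).resolve_left hua)

end LocalGlauber

open LocalGlauber in
theorem local_glauber_irreducible_general {V : Type*} [Fintype V] [DecidableEq V]
    (G : SimpleGraph V) (q : ℕ) (γ : ℝ) (hγ0 : 0 < γ) (hγ1 : γ < 1)
    (hq : 2 * G.maxDegree + 1 ≤ q)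
    (σ τ : V → Fin q) (hτ : IsProper G τ) :
    ∃ t : ℕ, 1 ≤ t ∧ 0 < Pt G q γ t σ τ := by
  have hq0 : 0 < q := by omega
  obtain ⟨μ, hμ, hσμ, hμτ⟩ :=
    exists_isProper_adj_ne (by omega : 2 * G.maxDegree < q) (Fintype.equivFin V) σ τ
  have hσμ_step : 0 < P G q γ σ μ :=
    glauberStep_eq_of_isProper hμ hσμ ▸ P_glauberStep_pos hγ0 hγ1.le hq0 σ μ
  have hμτ_path :=
    reflTransGen_of_isProper hγ0 hγ1.le hq0 (Fintype.equivFin V).injective hμ hτ hμτ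
  exact exists_Pt_pos_of_transGen hγ0.le hγ1.le (.head' hσμ_step hμτ_path)

open LocalGlauber in
/-- If `Δ ≥ 1` and `q ≥ 2Δ + 1`, then from every coloring `σ` (proper or not)
every proper coloring `τ` is reachable: there is `t ≥ 1` with `P^t(σ, τ) > 0`. -/
theorem local_glauber_irreducible {V : Type*} [Fintype V] [DecidableEq V]
    (G : SimpleGraph V) (q : ℕ) (γ : ℝ) (hγ0 : 0 < γ) (hγ1 : γ < 1)
    (hΔ : 1 ≤ G.maxDegree) (hq : 2 * G.maxDegree + 1 ≤ q)
    (σ τ : V → Fin q) (hτ : IsProper G τ) :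
    ∃ t : ℕ, 1 ≤ t ∧ 0 < Pt G q γ t σ τ :=
  local_glauber_irreducible_general G q γ hγ0 hγ1 hq σ τ hτ
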